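/- arXiv:1305.3155 — 3 statements merged into one kernel-verified Lean document; each statement's English description precedes it below -/
import Mathlib

section
/- Let X(u,v) = f(u) r(v) + g(u) e₄ be a meridian surface. Then its Gauss curvature, given by K = (1/W²) Σ_{k=1}^{2} (c₁₁ᵏ c₂₂ᵏ − (c₁₂ᵏ)²) with W² = EG − F² = f(u)² and c_{ij}ᵏ = ⟨X_{ij}, N_k⟩ the second fundamental form coefficients with respect to the normal frame N₁ = n, N₂ = −g' r + f' e₄, equals K(u,v) = κ_α(u) g'(u) / f(u), where κ_α(u) = f'(u)g''(u) − g'(u)f''(u). -/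
open scoped RealInnerProductSpace

section Aux

variable {E : Type*} [NormedAddCommGroup E] [NormedSpace ℝ E]

/-- derivative of `u ↦ f u • a + g u • b` -/
lemma deriv_smul_const_add_smul_const {f g : ℝ → ℝ} (hf : Differentiable ℝ f)
    (hg : Differentiable ℝ g) (a b : E) (u : ℝ) :
    deriv (fun u' => f u' • a + g u' • b) u = deriv f u • a + deriv g u • b :=
  (((hf u).hasDerivAt.smul_const a).add ((hg u).hasDerivAt.smul_const b)).deriv

/-- derivative of `v ↦ c • r v + w` -/
lemma deriv_const_smul_add_const {r : ℝ → E} (hr : Differentiable ℝ r) (c : ℝ) (w : E) (v : ℝ) :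
    deriv (fun v' => c • r v' + w) v = c • deriv r v :=
  ((((hr v).hasDerivAt.const_smul c)).add_const w).deriv

end Aux

set_option maxHeartbeats 1000000 in
/-- For the meridian surface `X(u,v) = f(u) r(v) + g(u) e₄`, the
Gauss curvature `K = (1/W²) Σₖ (c₁₁ᵏ c₂₂ᵏ − (c₁₂ᵏ)²)`, with
`W² = EG − F² = f(u)²`, equals `K = κ_α(u) g'(u) / f(u)` where
`κ_α = f'g'' − g'f''`. -/
theorem meridian_gauss_curvature
    (I J : Set ℝ) (hI : IsOpen I) (hJ : IsOpen J)
    (f g : ℝ → ℝ) (hf : ContDiff ℝ (⊤ : ℕ∞) f) (hg : ContDiff ℝ (⊤ : ℕ∞) g)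
    (hfpos : ∀ u ∈ I, 0 < f u)
    (hfg : ∀ u ∈ I, (deriv f u) ^ 2 + (deriv g u) ^ 2 = 1)
    (r n : ℝ → EuclideanSpace ℝ (Fin 4)) (κ : ℝ → ℝ)
    (hr : ContDiff ℝ (⊤ : ℕ∞) r) (hn : ContDiff ℝ (⊤ : ℕ∞) n)
    (hr4 : ∀ v, r v 3 = 0) (hn4 : ∀ v, n v 3 = 0)
    (hrnorm : ∀ v ∈ J, ‖r v‖ = 1)
    (hrspeed : ∀ v ∈ J, ‖deriv r v‖ = 1)
    (hnnorm : ∀ v ∈ J, ‖n v‖ = 1)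
    (hnr : ∀ v ∈ J, ⟪n v, r v⟫ = 0)
    (hnt : ∀ v ∈ J, ⟪n v, deriv r v⟫ = 0)
    (hfrenet_t : ∀ v ∈ J, deriv (deriv r) v = κ v • n v - r v)
    (hfrenet_n : ∀ v ∈ J, deriv n v = -(κ v) • deriv r v)
    (X : ℝ → ℝ → EuclideanSpace ℝ (Fin 4))
    (hX : ∀ u v, X u v = f u • r v + g u • EuclideanSpace.single (3 : Fin 4) (1 : ℝ))
    (Xu Xv Xuu Xuv Xvv : ℝ → ℝ → EuclideanSpace ℝ (Fin 4))
    (hXu : ∀ u v, Xu u v = deriv (fun u' => X u' v) u)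
    (hXv : ∀ u v, Xv u v = deriv (fun v' => X u v') v)
    (hXuu : ∀ u v, Xuu u v = deriv (deriv (fun u' => X u' v)) u)
    (hXuv : ∀ u v, Xuv u v = deriv (fun v' => deriv (fun u' => X u' v') u) v)
    (hXvv : ∀ u v, Xvv u v = deriv (deriv (fun v' => X u v')) v)
    (N₁ : ℝ → EuclideanSpace ℝ (Fin 4)) (N₂ : ℝ → ℝ → EuclideanSpace ℝ (Fin 4))
    (hN₁ : ∀ v, N₁ v = n v)
    (hN₂ : ∀ u v, N₂ u v
      = (-(deriv g u)) • r v + deriv f u • EuclideanSpace.single (3 : Fin 4) (1 : ℝ))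
    (κα : ℝ → ℝ)
    (hκα : ∀ u, κα u = deriv f u * deriv (deriv g) u - deriv g u * deriv (deriv f) u) :
    ∀ u ∈ I, ∀ v ∈ J,
      ⟪Xu u v, Xu u v⟫ * ⟪Xv u v, Xv u v⟫ - ⟪Xu u v, Xv u v⟫ ^ 2 = (f u) ^ 2 ∧
      (1 / (⟪Xu u v, Xu u v⟫ * ⟪Xv u v, Xv u v⟫ - ⟪Xu u v, Xv u v⟫ ^ 2)) *
        ((⟪Xuu u v, N₁ v⟫ * ⟪Xvv u v, N₁ v⟫ - ⟪Xuv u v, N₁ v⟫ ^ 2) +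
         (⟪Xuu u v, N₂ u v⟫ * ⟪Xvv u v, N₂ u v⟫ - ⟪Xuv u v, N₂ u v⟫ ^ 2))
        = κα u * deriv g u / f u := by
  intro u hu v hv
  set e₄ : EuclideanSpace ℝ (Fin 4) := EuclideanSpace.single (3 : Fin 4) (1 : ℝ) with he₄
  have hfd : Differentiable ℝ f := hf.differentiable (by simp)
  have hgd : Differentiable ℝ g := hg.differentiable (by simp)
  have hrd : Differentiable ℝ r := hr.differentiable (by simp)
  have hfd' : Differentiable ℝ (deriv f) := ((contDiff_infty_iff_deriv.mp (hf.of_le (by simp))).2).differentiable (by simp)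
  have hgd' : Differentiable ℝ (deriv g) := ((contDiff_infty_iff_deriv.mp (hg.of_le (by simp))).2).differentiable (by simp)
  have hrd' : Differentiable ℝ (deriv r) := ((contDiff_infty_iff_deriv.mp (hr.of_le (by simp))).2).differentiable (by simp)
  -- first u-derivative, as a function
  have hDu : ∀ v', deriv (fun u' => X u' v') = fun u' => deriv f u' • r v' + deriv g u' • e₄ := by
    intro v'
    funext u'
    have : (fun u'' => X u'' v') = fun u'' => f u'' • r v' + g u'' • e₄ := by
      funext u''; exact hX u'' v'
    rw [this, deriv_smul_const_add_smul_const hfd hgd]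
  -- first v-derivative, as a function
  have hDv : deriv (fun v' => X u v') = fun v' => f u • deriv r v' := by
    funext v'
    have : (fun v'' => X u v'') = fun v'' => f u • r v'' + g u • e₄ := by
      funext v''; exact hX u v''
    rw [this, deriv_const_smul_add_const hrd]
  have hXu' : Xu u v = deriv f u • r v + deriv g u • e₄ := by
    rw [hXu, hDu]
  have hXv' : Xv u v = f u • deriv r v := by
    rw [hXv, hDv]
  have hXuu' : Xuu u v = deriv (deriv f) u • r v + deriv (deriv g) u • e₄ := by
    rw [hXuu, hDu, deriv_smul_const_add_smul_const hfd' hgd']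
  have hXuv' : Xuv u v = deriv f u • deriv r v := by
    rw [hXuv]
    have : (fun v' => deriv (fun u' => X u' v') u) = fun v' => deriv f u • r v' + deriv g u • e₄ := by
      funext v'; rw [hDu]
    have h2 : (fun v' => deriv f u • r v' + deriv g u • e₄)
        = fun v' => deriv f u • r v' + (deriv g u • e₄) := rfl
    rw [this, h2, deriv_const_smul_add_const hrd]
  have hXvv' : Xvv u v = f u • (κ v • n v - r v) := by
    rw [hXvv, hDv]
    have : (fun v' => f u • deriv r v') = fun v' => f u • deriv r v' + (0 : EuclideanSpace ℝ (Fin 4)) := by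
      funext v'; simp
    rw [this, deriv_const_smul_add_const hrd', hfrenet_t v hv]
  -- basic inner products
  have irr : ⟪r v, r v⟫ = (1 : ℝ) := by
    rw [real_inner_self_eq_norm_sq, hrnorm v hv]; norm_num
  have itt : ⟪deriv r v, deriv r v⟫ = (1 : ℝ) := by
    rw [real_inner_self_eq_norm_sq, hrspeed v hv]; norm_num
  have inn : ⟪n v, n v⟫ = (1 : ℝ) := by
    rw [real_inner_self_eq_norm_sq, hnnorm v hv]; norm_num
  -- ⟪r, r'⟫ = 0 since ‖r‖ is locally constant on J
  have irt : ⟪r v, deriv r v⟫ = (0 : ℝ) := by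
    have hloc : (fun w => ⟪r w, r w⟫) =ᶠ[nhds v] fun _ => (1 : ℝ) := by
      filter_upwards [hJ.mem_nhds hv] with w hw
      rw [real_inner_self_eq_norm_sq, hrnorm w hw]; norm_num
    have h1 : deriv (fun w => ⟪r w, r w⟫) v = 0 := by
      rw [Filter.EventuallyEq.deriv_eq hloc, deriv_const]
    have h2 : deriv (fun w => ⟪r w, r w⟫) v = ⟪r v, deriv r v⟫ + ⟪deriv r v, r v⟫ :=
      deriv_inner_apply ℝ (hrd v) (hrd v)
    rw [h1, real_inner_comm (r v) (deriv r v)] at h2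
    linarith [h2, real_inner_comm (r v) (deriv r v)]
  -- e₄ inner products
  have ie : ∀ x : EuclideanSpace ℝ (Fin 4), ⟪x, e₄⟫ = x 3 := by
    intro x
    rw [he₄]
    have := EuclideanSpace.inner_single_right (𝕜 := ℝ) (3 : Fin 4) (1 : ℝ) x
    simpa using this
  have ire : ⟪r v, e₄⟫ = (0 : ℝ) := by rw [ie, hr4]
  have ine : ⟪n v, e₄⟫ = (0 : ℝ) := by rw [ie, hn4]
  have idr4 : deriv r v 3 = 0 := by
    have hc : (fun w => r w 3) = fun _ => (0 : ℝ) := by funext w; exact hr4 w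
    have hproj : HasDerivAt (fun w => r w 3) ((deriv r v) 3) v := by
      have h1 : HasDerivAt r (deriv r v) v := (hrd v).hasDerivAt
      have h2 := (EuclideanSpace.proj (3 : Fin 4) :
        EuclideanSpace ℝ (Fin 4) →L[ℝ] ℝ).hasFDerivAt.comp_hasDerivAt v h1
      exact h2
    have := hproj.deriv
    rw [hc] at this
    simp at this
    rw [← this]
  have ite' : ⟪deriv r v, e₄⟫ = (0 : ℝ) := by rw [ie, idr4]
  have iee : ⟪e₄, e₄⟫ = (1 : ℝ) := by
    rw [ie, he₄]; simp
  -- symmetric versions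
  have irn : ⟪r v, n v⟫ = (0 : ℝ) := by rw [real_inner_comm]; exact hnr v hv
  have itn : ⟪deriv r v, n v⟫ = (0 : ℝ) := by rw [real_inner_comm]; exact hnt v hv
  have itr : ⟪deriv r v, r v⟫ = (0 : ℝ) := by rw [real_inner_comm]; exact irt
  have ier : ⟪e₄, r v⟫ = (0 : ℝ) := by rw [real_inner_comm]; exact ire
  have ien : ⟪e₄, n v⟫ = (0 : ℝ) := by rw [real_inner_comm]; exact ine
  have iet : ⟪e₄, deriv r v⟫ = (0 : ℝ) := by rw [real_inner_comm]; exact ite'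
  have hW : ⟪Xu u v, Xu u v⟫ * ⟪Xv u v, Xv u v⟫ - ⟪Xu u v, Xv u v⟫ ^ 2 = (f u) ^ 2 := by
    rw [hXu', hXv']
    simp only [inner_add_left, inner_add_right, real_inner_smul_left, real_inner_smul_right,
      irr, itt, irt, itr, ire, ier, iee, iet, ite']
    have h := hfg u hu
    linear_combination (f u)^2 * h
  refine ⟨hW, ?_⟩
  rw [hW, hXuu', hXuv', hXvv', hN₁ v, hN₂, hκα]
  simp only [inner_add_left, inner_add_right, inner_sub_left, inner_sub_right,
    real_inner_smul_left, real_inner_smul_right,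
    irr, itt, inn, irt, itr, irn, itn, ire, ier, ine, ien, ite', iet, iee,
    hnr v hv, hnt v hv]
  have hfne : f u ≠ 0 := ne_of_gt (hfpos u hu)
  field_simp
  ring
end

section
/- Let X(u,v) = f(u) r(v) + g(u) e₄ be a meridian surface. Then its mean curvature vector, given by H⃗ = (1/(2W²)) Σ_{k=1}^{2} (c₁₁ᵏ G + c₂₂ᵏ E − 2 c₁₂ᵏ F) N_k with respect to the normal frame N₁ = n, N₂ = −g' r + f' e₄, equals H⃗ = (κ(v)/(2f(u))) N₁ + ((κ_α(u) f(u) + g'(u))/(2f(u))) N₂, and consequently the mean curvature H = ‖H⃗‖ satisfies H(u,v) = (1/(2f(u))) √( κ(v)² + (κ_α(u) f(u) + g'(u))² ). -/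
open scoped RealInnerProductSpace

/-- For the meridian surface `X(u,v) = f(u) r(v) + g(u) e₄`, the
mean curvature vector `H⃗ = (1/(2W²)) Σₖ (c₁₁ᵏ G + c₂₂ᵏ E − 2c₁₂ᵏ F) N_k`
equals `(κ/(2f)) N₁ + ((κ_α f + g')/(2f)) N₂`, and consequently the mean
curvature `H = ‖H⃗‖` equals `(1/(2f)) √(κ² + (κ_α f + g')²)`. -/
theorem meridian_mean_curvature
    (I J : Set ℝ) (hI : IsOpen I) (hJ : IsOpen J)
    (f g : ℝ → ℝ) (hf : ContDiff ℝ (⊤ : ℕ∞) f) (hg : ContDiff ℝ (⊤ : ℕ∞) g)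
    (hfpos : ∀ u ∈ I, 0 < f u)
    (hfg : ∀ u ∈ I, (deriv f u) ^ 2 + (deriv g u) ^ 2 = 1)
    (r n : ℝ → EuclideanSpace ℝ (Fin 4)) (κ : ℝ → ℝ)
    (hr : ContDiff ℝ (⊤ : ℕ∞) r) (hn : ContDiff ℝ (⊤ : ℕ∞) n)
    (hr4 : ∀ v, r v 3 = 0) (hn4 : ∀ v, n v 3 = 0)
    (hrnorm : ∀ v ∈ J, ‖r v‖ = 1)
    (hrspeed : ∀ v ∈ J, ‖deriv r v‖ = 1)
    (hnnorm : ∀ v ∈ J, ‖n v‖ = 1)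
    (hnr : ∀ v ∈ J, ⟪n v, r v⟫ = 0)
    (hnt : ∀ v ∈ J, ⟪n v, deriv r v⟫ = 0)
    (hfrenet_t : ∀ v ∈ J, deriv (deriv r) v = κ v • n v - r v)
    (hfrenet_n : ∀ v ∈ J, deriv n v = -(κ v) • deriv r v)
    (X : ℝ → ℝ → EuclideanSpace ℝ (Fin 4))
    (hX : ∀ u v, X u v = f u • r v + g u • EuclideanSpace.single (3 : Fin 4) (1 : ℝ))
    (Xu Xv Xuu Xuv Xvv : ℝ → ℝ → EuclideanSpace ℝ (Fin 4))
    (hXu : ∀ u v, Xu u v = deriv (fun u' => X u' v) u)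
    (hXv : ∀ u v, Xv u v = deriv (fun v' => X u v') v)
    (hXuu : ∀ u v, Xuu u v = deriv (deriv (fun u' => X u' v)) u)
    (hXuv : ∀ u v, Xuv u v = deriv (fun v' => deriv (fun u' => X u' v') u) v)
    (hXvv : ∀ u v, Xvv u v = deriv (deriv (fun v' => X u v')) v)
    (N₁ : ℝ → EuclideanSpace ℝ (Fin 4)) (N₂ : ℝ → ℝ → EuclideanSpace ℝ (Fin 4))
    (hN₁ : ∀ v, N₁ v = n v)
    (hN₂ : ∀ u v, N₂ u v
      = (-(deriv g u)) • r v + deriv f u • EuclideanSpace.single (3 : Fin 4) (1 : ℝ))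
    (κα : ℝ → ℝ)
    (hκα : ∀ u, κα u = deriv f u * deriv (deriv g) u - deriv g u * deriv (deriv f) u) :
    ∀ u ∈ I, ∀ v ∈ J,
      (1 / (2 * (⟪Xu u v, Xu u v⟫ * ⟪Xv u v, Xv u v⟫ - ⟪Xu u v, Xv u v⟫ ^ 2))) •
        ((⟪Xuu u v, N₁ v⟫ * ⟪Xv u v, Xv u v⟫ + ⟪Xvv u v, N₁ v⟫ * ⟪Xu u v, Xu u v⟫
            - 2 * ⟪Xuv u v, N₁ v⟫ * ⟪Xu u v, Xv u v⟫) • N₁ v +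
         (⟪Xuu u v, N₂ u v⟫ * ⟪Xv u v, Xv u v⟫ + ⟪Xvv u v, N₂ u v⟫ * ⟪Xu u v, Xu u v⟫
            - 2 * ⟪Xuv u v, N₂ u v⟫ * ⟪Xu u v, Xv u v⟫) • N₂ u v)
        = (κ v / (2 * f u)) • N₁ v + ((κα u * f u + deriv g u) / (2 * f u)) • N₂ u v ∧
      ‖(κ v / (2 * f u)) • N₁ v + ((κα u * f u + deriv g u) / (2 * f u)) • N₂ u v‖
        = (1 / (2 * f u)) * Real.sqrt (κ v ^ 2 + (κα u * f u + deriv g u) ^ 2) := by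
  intro u hu v hv
  have hfne : f u ≠ 0 := ne_of_gt (hfpos u hu)
  have hfd : Differentiable ℝ f := hf.differentiable (by simp)
  have hgd : Differentiable ℝ g := hg.differentiable (by simp)
  have hrd : Differentiable ℝ r := hr.differentiable (by simp)
  have hfd' : Differentiable ℝ (deriv f) :=
    ((contDiff_infty_iff_deriv.mp (hf.of_le (by simp))).2).differentiable (by simp)
  have hgd' : Differentiable ℝ (deriv g) :=
    ((contDiff_infty_iff_deriv.mp (hg.of_le (by simp))).2).differentiable (by simp)
  have hrd' : Differentiable ℝ (deriv r) :=
    ((contDiff_infty_iff_deriv.mp (hr.of_le (by simp))).2).differentiable (by simp)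
  -- first order derivatives
  have hXu' : ∀ a b, HasDerivAt (fun u' => X u' b)
      (deriv f a • r b + deriv g a • EuclideanSpace.single (3 : Fin 4) (1 : ℝ)) a := by
    intro a b
    have h := ((hfd a).hasDerivAt.smul_const (r b)).add
      ((hgd a).hasDerivAt.smul_const (EuclideanSpace.single (3 : Fin 4) (1 : ℝ)))
    simp only [hX]; exact h
  have hXv' : ∀ b, HasDerivAt (fun v' => X u v') (f u • deriv r b) b := by
    intro b
    have h := (((hrd b).hasDerivAt.const_smul (f u)).add_const
      (g u • EuclideanSpace.single (3 : Fin 4) (1 : ℝ)))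
    simpa [hX] using h
  have hXuval : Xu u v = deriv f u • r v + deriv g u • EuclideanSpace.single (3 : Fin 4) (1 : ℝ) := by
    rw [hXu]; exact (hXu' u v).deriv
  have hXvval : Xv u v = f u • deriv r v := by
    rw [hXv]; exact (hXv' v).deriv
  have hXuuval : Xuu u v = deriv (deriv f) u • r v
      + deriv (deriv g) u • EuclideanSpace.single (3 : Fin 4) (1 : ℝ) := by
    rw [hXuu]
    have hfun : deriv (fun u' => X u' v) = fun a =>
        deriv f a • r v + deriv g a • EuclideanSpace.single (3 : Fin 4) (1 : ℝ) :=
      funext fun a => (hXu' a v).deriv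
    rw [hfun]
    exact (((hfd' u).hasDerivAt.smul_const (r v)).add
      ((hgd' u).hasDerivAt.smul_const (EuclideanSpace.single (3 : Fin 4) (1 : ℝ)))).deriv
  have hXuvval : Xuv u v = deriv f u • deriv r v := by
    rw [hXuv]
    have hfun : (fun v' => deriv (fun u' => X u' v') u) = fun v' =>
        deriv f u • r v' + deriv g u • EuclideanSpace.single (3 : Fin 4) (1 : ℝ) :=
      funext fun b => (hXu' u b).deriv
    rw [hfun]
    exact (((hrd v).hasDerivAt.const_smul (deriv f u)).add_const _).deriv
  have hXvvval : Xvv u v = f u • (κ v • n v - r v) := by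
    rw [hXvv]
    have hfun : deriv (fun v' => X u v') = fun b => f u • deriv r b :=
      funext fun b => (hXv' b).deriv
    rw [hfun, ← hfrenet_t v hv]
    exact ((hrd' v).hasDerivAt.const_smul (f u)).deriv
  -- inner product facts
  have hRR : (⟪r v, r v⟫ : ℝ) = 1 := by
    rw [real_inner_self_eq_norm_sq, hrnorm v hv]; norm_num
  have hTT : (⟪deriv r v, deriv r v⟫ : ℝ) = 1 := by
    rw [real_inner_self_eq_norm_sq, hrspeed v hv]; norm_num
  have hNN : (⟪n v, n v⟫ : ℝ) = 1 := by
    rw [real_inner_self_eq_norm_sq, hnnorm v hv]; norm_num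
  have hNR := hnr v hv
  have hNT := hnt v hv
  have hRN : (⟪r v, n v⟫ : ℝ) = 0 := by rw [real_inner_comm]; exact hNR
  have hTN : (⟪deriv r v, n v⟫ : ℝ) = 0 := by rw [real_inner_comm]; exact hNT
  have hT3 : deriv r v 3 = 0 := by
    have h1 : HasDerivAt (fun b => (EuclideanSpace.proj (3 : Fin 4)) (r b))
        ((EuclideanSpace.proj (3 : Fin 4)) (deriv r v)) v := by
      exact
        (EuclideanSpace.proj (3 : Fin 4)).hasFDerivAt.comp_hasDerivAt v (hrd v).hasDerivAt
    have h2 : (fun b => (EuclideanSpace.proj (3 : Fin 4)) (r b)) = fun _ => (0 : ℝ) :=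
      funext fun b => by simpa using hr4 b
    rw [h2] at h1
    have h3 := h1.unique (hasDerivAt_const _ _)
    simpa using h3
  have hTR : (⟪deriv r v, r v⟫ : ℝ) = 0 := by
    have h1 : HasDerivAt (fun b => (⟪r b, r b⟫ : ℝ))
        (⟪r v, deriv r v⟫ + ⟪deriv r v, r v⟫) v :=
      HasDerivAt.inner ℝ (hrd v).hasDerivAt (hrd v).hasDerivAt
    have h2 : deriv (fun b => (⟪r b, r b⟫ : ℝ)) v = 0 := by
      have heq : (fun b => (⟪r b, r b⟫ : ℝ)) =ᶠ[nhds v] fun _ => (1 : ℝ) := by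
        filter_upwards [hJ.mem_nhds hv] with b hb
        rw [real_inner_self_eq_norm_sq, hrnorm b hb]; norm_num
      rw [heq.deriv_eq, deriv_const]
    have h3 := h1.deriv
    rw [h2] at h3
    have hc : (⟪r v, deriv r v⟫ : ℝ) = ⟪deriv r v, r v⟫ := real_inner_comm _ _
    linarith [h3, hc]
  have hRT : (⟪r v, deriv r v⟫ : ℝ) = 0 := by rw [real_inner_comm]; exact hTR
  -- the six coefficients and first fundamental form
  have hE : (⟪Xu u v, Xu u v⟫ : ℝ) = 1 := by
    rw [hXuval]
    simp only [inner_add_left, inner_add_right, inner_sub_left, inner_sub_right,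
      real_inner_smul_left, real_inner_smul_right,
      EuclideanSpace.inner_single_left, EuclideanSpace.inner_single_right,
      EuclideanSpace.single_apply, PiLp.smul_apply, PiLp.add_apply, PiLp.sub_apply,
      smul_eq_mul, conj_trivial, hRR, hTT, hNN, hNR, hNT, hRN, hTN, hTR, hRT, hr4, hn4, hT3]
    norm_num
    linear_combination hfg u hu
  have hF : (⟪Xu u v, Xv u v⟫ : ℝ) = 0 := by
    rw [hXuval, hXvval]
    simp only [inner_add_left, inner_add_right, inner_sub_left, inner_sub_right,
      real_inner_smul_left, real_inner_smul_right,
      EuclideanSpace.inner_single_left, EuclideanSpace.inner_single_right,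
      EuclideanSpace.single_apply, PiLp.smul_apply, PiLp.add_apply, PiLp.sub_apply,
      smul_eq_mul, conj_trivial, hRR, hTT, hNN, hNR, hNT, hRN, hTN, hTR, hRT, hr4, hn4, hT3]
    norm_num
  have hG : (⟪Xv u v, Xv u v⟫ : ℝ) = f u ^ 2 := by
    rw [hXvval]
    simp only [inner_add_left, inner_add_right, inner_sub_left, inner_sub_right,
      real_inner_smul_left, real_inner_smul_right,
      EuclideanSpace.inner_single_left, EuclideanSpace.inner_single_right,
      EuclideanSpace.single_apply, PiLp.smul_apply, PiLp.add_apply, PiLp.sub_apply,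
      smul_eq_mul, conj_trivial, hRR, hTT, hNN, hNR, hNT, hRN, hTN, hTR, hRT, hr4, hn4, hT3]
    ring
  have hc11a : (⟪Xuu u v, N₁ v⟫ : ℝ) = 0 := by
    rw [hXuuval, hN₁]
    simp only [inner_add_left, inner_add_right, inner_sub_left, inner_sub_right,
      real_inner_smul_left, real_inner_smul_right,
      EuclideanSpace.inner_single_left, EuclideanSpace.inner_single_right,
      EuclideanSpace.single_apply, PiLp.smul_apply, PiLp.add_apply, PiLp.sub_apply,
      smul_eq_mul, conj_trivial, hRR, hTT, hNN, hNR, hNT, hRN, hTN, hTR, hRT, hr4, hn4, hT3]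
    norm_num
  have hc22a : (⟪Xvv u v, N₁ v⟫ : ℝ) = f u * κ v := by
    rw [hXvvval, hN₁]
    simp only [inner_add_left, inner_add_right, inner_sub_left, inner_sub_right,
      real_inner_smul_left, real_inner_smul_right,
      EuclideanSpace.inner_single_left, EuclideanSpace.inner_single_right,
      EuclideanSpace.single_apply, PiLp.smul_apply, PiLp.add_apply, PiLp.sub_apply,
      smul_eq_mul, conj_trivial, hRR, hTT, hNN, hNR, hNT, hRN, hTN, hTR, hRT, hr4, hn4, hT3]
    ring
  have hc12a : (⟪Xuv u v, N₁ v⟫ : ℝ) = 0 := by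
    rw [hXuvval, hN₁]
    simp only [inner_add_left, inner_add_right, inner_sub_left, inner_sub_right,
      real_inner_smul_left, real_inner_smul_right,
      EuclideanSpace.inner_single_left, EuclideanSpace.inner_single_right,
      EuclideanSpace.single_apply, PiLp.smul_apply, PiLp.add_apply, PiLp.sub_apply,
      smul_eq_mul, conj_trivial, hRR, hTT, hNN, hNR, hNT, hRN, hTN, hTR, hRT, hr4, hn4, hT3]
    norm_num
  have hc11b : (⟪Xuu u v, N₂ u v⟫ : ℝ) = κα u := by
    rw [hXuuval, hN₂, hκα]
    simp only [inner_add_left, inner_add_right, inner_sub_left, inner_sub_right,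
      real_inner_smul_left, real_inner_smul_right,
      EuclideanSpace.inner_single_left, EuclideanSpace.inner_single_right,
      EuclideanSpace.single_apply, PiLp.smul_apply, PiLp.add_apply, PiLp.sub_apply,
      smul_eq_mul, conj_trivial, hRR, hTT, hNN, hNR, hNT, hRN, hTN, hTR, hRT, hr4, hn4, hT3]
    norm_num
    ring
  have hc22b : (⟪Xvv u v, N₂ u v⟫ : ℝ) = f u * deriv g u := by
    rw [hXvvval, hN₂]
    simp only [inner_add_left, inner_add_right, inner_sub_left, inner_sub_right,
      real_inner_smul_left, real_inner_smul_right,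
      EuclideanSpace.inner_single_left, EuclideanSpace.inner_single_right,
      EuclideanSpace.single_apply, PiLp.smul_apply, PiLp.add_apply, PiLp.sub_apply,
      smul_eq_mul, conj_trivial, hRR, hTT, hNN, hNR, hNT, hRN, hTN, hTR, hRT, hr4, hn4, hT3]
    norm_num
    ring
  have hc12b : (⟪Xuv u v, N₂ u v⟫ : ℝ) = 0 := by
    rw [hXuvval, hN₂]
    simp only [inner_add_left, inner_add_right, inner_sub_left, inner_sub_right,
      real_inner_smul_left, real_inner_smul_right,
      EuclideanSpace.inner_single_left, EuclideanSpace.inner_single_right,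
      EuclideanSpace.single_apply, PiLp.smul_apply, PiLp.add_apply, PiLp.sub_apply,
      smul_eq_mul, conj_trivial, hRR, hTT, hNN, hNR, hNT, hRN, hTN, hTR, hRT, hr4, hn4, hT3]
    norm_num
  -- normal frame facts
  have hN1N1 : (⟪N₁ v, N₁ v⟫ : ℝ) = 1 := by rw [hN₁]; exact hNN
  have hN1N2 : (⟪N₁ v, N₂ u v⟫ : ℝ) = 0 := by
    rw [hN₁, hN₂]
    simp only [inner_add_left, inner_add_right, inner_sub_left, inner_sub_right,
      real_inner_smul_left, real_inner_smul_right,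
      EuclideanSpace.inner_single_left, EuclideanSpace.inner_single_right,
      EuclideanSpace.single_apply, PiLp.smul_apply, PiLp.add_apply, PiLp.sub_apply,
      smul_eq_mul, conj_trivial, hRR, hTT, hNN, hNR, hNT, hRN, hTN, hTR, hRT, hr4, hn4, hT3]
    norm_num
  have hN2N1 : (⟪N₂ u v, N₁ v⟫ : ℝ) = 0 := by rw [real_inner_comm]; exact hN1N2
  have hN2N2 : (⟪N₂ u v, N₂ u v⟫ : ℝ) = 1 := by
    rw [hN₂]
    simp only [inner_add_left, inner_add_right, inner_sub_left, inner_sub_right,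
      real_inner_smul_left, real_inner_smul_right,
      EuclideanSpace.inner_single_left, EuclideanSpace.inner_single_right,
      EuclideanSpace.single_apply, PiLp.smul_apply, PiLp.add_apply, PiLp.sub_apply,
      smul_eq_mul, conj_trivial, hRR, hTT, hNN, hNR, hNT, hRN, hTN, hTR, hRT, hr4, hn4, hT3]
    norm_num
    linear_combination hfg u hu
  constructor
  · rw [hE, hF, hG, hc11a, hc22a, hc12a, hc11b, hc22b, hc12b]
    match_scalars <;> (field_simp; ring)
  · rw [norm_eq_sqrt_real_inner]
    have hsq : (⟪(κ v / (2 * f u)) • N₁ v + ((κα u * f u + deriv g u) / (2 * f u)) • N₂ u v,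
        (κ v / (2 * f u)) • N₁ v + ((κα u * f u + deriv g u) / (2 * f u)) • N₂ u v⟫ : ℝ)
        = (κ v / (2 * f u)) ^ 2 + ((κα u * f u + deriv g u) / (2 * f u)) ^ 2 := by
      simp only [inner_add_left, inner_add_right, real_inner_smul_left, real_inner_smul_right,
        hN1N1, hN1N2, hN2N1, hN2N2]
      ring
    rw [hsq]
    have hkey : (κ v / (2 * f u)) ^ 2 + ((κα u * f u + deriv g u) / (2 * f u)) ^ 2
        = (1 / (2 * f u)) ^ 2 * (κ v ^ 2 + (κα u * f u + deriv g u) ^ 2) := by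
      field_simp
    rw [hkey, Real.sqrt_mul (sq_nonneg _), Real.sqrt_sq (div_nonneg zero_le_one (by linarith [hfpos u hu]))]
end

section
/- Let K(u,v) = −f''(u)/f(u) and H(u,v) = (1/(2f(u))) √( κ(v)² + (κ_α(u) f(u) + g'(u))² ) be the Gauss and mean curvatures of a meridian surface, with f > 0, κ(v)² + (κ_α(u) f(u) + g'(u))² > 0. Then the Jacobian K_u H_v − K_v H_u equals −κ(v) κ'(v) ( f(u) f'''(u) − f'(u) f''(u) ) / ( 2 f(u)³ √( κ(v)² + (κ_α(u) f(u) + g'(u))² ) ); consequently, the surface satisfies the Weingarten condition K_u H_v − K_v H_u = 0 on I × J if and only if κ(v) κ'(v) ( f(u) f'''(u) − f'(u) f''(u) ) = 0 for all (u,v) ∈ I × J. -/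
/-- For the Gauss curvature `K = −f''/f` and mean curvature
`H = (1/(2f)) √(κ² + (κ_α f + g')²)` of a meridian surface, the Jacobian
`K_u H_v − K_v H_u` equals
`−κ κ' (f f''' − f' f'') / (2 f³ √(κ² + (κ_α f + g')²))`; consequently the
Weingarten condition `K_u H_v − K_v H_u = 0` holds on `I × J` iff
`κ(v) κ'(v) (f(u) f'''(u) − f'(u) f''(u)) = 0` for all `(u,v) ∈ I × J`. -/
theorem meridian_weingarten_condition
    (I J : Set ℝ) (hI : IsOpen I) (hJ : IsOpen J)
    (f κ : ℝ → ℝ) (hf : ContDiff ℝ (⊤ : ℕ∞) f) (hκ : ContDiff ℝ (⊤ : ℕ∞) κ)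
    (hfpos : ∀ u ∈ I, 0 < f u)
    (hf' : ∀ u ∈ I, (deriv f u) ^ 2 < 1)
    (g' κα : ℝ → ℝ)
    (hg' : ∀ u, g' u = Real.sqrt (1 - (deriv f u) ^ 2))
    (hκα : ∀ u, κα u = -(deriv (deriv f) u) / Real.sqrt (1 - (deriv f u) ^ 2))
    (K H : ℝ → ℝ → ℝ)
    (hK : ∀ u v, K u v = -(deriv (deriv f) u) / f u)
    (hH : ∀ u v, H u v
      = (1 / (2 * f u)) * Real.sqrt (κ v ^ 2 + (κα u * f u + g' u) ^ 2))
    (hpos : ∀ u ∈ I, ∀ v ∈ J, 0 < κ v ^ 2 + (κα u * f u + g' u) ^ 2) :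
    (∀ u ∈ I, ∀ v ∈ J,
      deriv (fun u' => K u' v) u * deriv (fun v' => H u v') v
          - deriv (fun v' => K u v') v * deriv (fun u' => H u' v) u
        = -(κ v * deriv κ v
              * (f u * deriv (deriv (deriv f)) u - deriv f u * deriv (deriv f) u))
            / (2 * (f u) ^ 3 * Real.sqrt (κ v ^ 2 + (κα u * f u + g' u) ^ 2))) ∧
    ((∀ u ∈ I, ∀ v ∈ J,
        deriv (fun u' => K u' v) u * deriv (fun v' => H u v') v
          - deriv (fun v' => K u v') v * deriv (fun u' => H u' v) u = 0) ↔
      (∀ u ∈ I, ∀ v ∈ J,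
        κ v * deriv κ v
          * (f u * deriv (deriv (deriv f)) u - deriv f u * deriv (deriv f) u) = 0)) := by

  have hfi : ContDiff ℝ (⊤ : ℕ∞) f := hf.of_le (by simp)
  have hfd : Differentiable ℝ f := hfi.differentiable (by simp)
  have hf1 : ContDiff ℝ (⊤ : ℕ∞) (deriv f) := (contDiff_infty_iff_deriv.mp hfi).2
  have hf2 : ContDiff ℝ (⊤ : ℕ∞) (deriv (deriv f)) := (contDiff_infty_iff_deriv.mp hf1).2
  have key : ∀ u ∈ I, ∀ v ∈ J,
      deriv (fun u' => K u' v) u * deriv (fun v' => H u v') v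
          - deriv (fun v' => K u v') v * deriv (fun u' => H u' v) u
        = -(κ v * deriv κ v
              * (f u * deriv (deriv (deriv f)) u - deriv f u * deriv (deriv f) u))
            / (2 * (f u) ^ 3 * Real.sqrt (κ v ^ 2 + (κα u * f u + g' u) ^ 2)) := by
    intro u hu v hv
    have hfu : f u ≠ 0 := (hfpos u hu).ne'
    have hSpos := hpos u hu v hv
    have hsq : Real.sqrt (κ v ^ 2 + (κα u * f u + g' u) ^ 2) ≠ 0 :=
      (Real.sqrt_pos.mpr hSpos).ne'
    have hKv : deriv (fun v' => K u v') v = 0 := by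
      have h : (fun v' => K u v') = fun _ => -(deriv (deriv f) u) / f u :=
        funext fun v' => hK u v'
      rw [h, deriv_const]
    have hKu : HasDerivAt (fun u' => K u' v)
        ((-(deriv (deriv (deriv f)) u) * f u - (-(deriv (deriv f) u)) * deriv f u)
          / f u ^ 2) u := by
      have h1 : HasDerivAt (fun u' => -(deriv (deriv f) u'))
          (-(deriv (deriv (deriv f)) u)) u :=
        ((hf2.differentiable (by simp) u).hasDerivAt).neg
      have h2 : HasDerivAt f (deriv f u) u := (hfd u).hasDerivAt
      have h3 := h1.div h2 hfu
      have h : (fun u' => K u' v) = fun u' => -(deriv (deriv f) u') / f u' :=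
        funext fun u' => hK u' v
      rw [h]; exact h3
    have hHv : HasDerivAt (fun v' => H u v')
        ((1 / (2 * f u)) * ((2 * κ v ^ 1 * deriv κ v)
          / (2 * Real.sqrt (κ v ^ 2 + (κα u * f u + g' u) ^ 2)))) v := by
      have hk : HasDerivAt κ (deriv κ v) v := (hκ.differentiable (by simp) v).hasDerivAt
      have hk2 : HasDerivAt (fun v' => κ v' ^ 2) (2 * κ v ^ 1 * deriv κ v) v := by
        have h0 := hk.pow 2
        norm_num at h0 ⊢
        exact h0
      have hk3 : HasDerivAt (fun v' => κ v' ^ 2 + (κα u * f u + g' u) ^ 2)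
          (2 * κ v ^ 1 * deriv κ v) v := hk2.add_const _
      have hk4 := (hk3.sqrt hSpos.ne').const_mul (1 / (2 * f u))
      have h : (fun v' => H u v')
          = fun v' => (1 / (2 * f u)) * Real.sqrt (κ v' ^ 2 + (κα u * f u + g' u) ^ 2) :=
        funext fun v' => hH u v'
      rw [h]; exact hk4
    rw [hKv, hKu.deriv, hHv.deriv]
    field_simp
    ring
  refine ⟨key, ?_, ?_⟩
  · intro h u hu v hv
    have h1 := key u hu v hv
    rw [h u hu v hv] at h1
    have hfu : f u ≠ 0 := (hfpos u hu).ne'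
    have hsq : Real.sqrt (κ v ^ 2 + (κα u * f u + g' u) ^ 2) ≠ 0 :=
      (Real.sqrt_pos.mpr (hpos u hu v hv)).ne'
    have hD : (2 * (f u) ^ 3 * Real.sqrt (κ v ^ 2 + (κα u * f u + g' u) ^ 2)) ≠ 0 := by
      positivity
    have := (div_eq_zero_iff.mp h1.symm).resolve_right hD
    exact neg_eq_zero.mp this
  · intro h u hu v hv
    rw [key u hu v hv, h u hu v hv]
    simp
end
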